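/- The bracket on M defined by the given multiplication table satisfies the Jacobi identity, so M is an 11-dimensional complex Lie algebra, and M is isomorphic as a Lie algebra to the direct product sl₂(ℂ) × sl₃(ℂ). -/
import Mathlib


set_option linter.unreachableTactic false
set_option linter.unnecessarySeqFocus false
set_option linter.unusedTactic false
set_option maxHeartbeats 1000000

noncomputable section

/-- The underlying 11-dimensional space of the Lie algebra `M = F(A4)`. -/
abbrev V11 : Type := Fin 11 → ℂ

/-- The standard basis `ξ1, …, ξ11` of `M`, indexed here by `0, …, 10`. -/
def ξ (i : Fin 11) : V11 := Pi.single i 1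

/-- The bracket of `M = F(A4)` as a plain bilinear expression.  The nonzero
products among basis vectors (up to antisymmetry), with `ξn` of the paper
corresponding to `ξ (n-1)` here, are:
`[ξ1,ξ3]=−2ξ4, [ξ1,ξ5]=−ξ1, [ξ1,ξ7]=−3ξ3, [ξ1,ξ8]=ξ5, [ξ1,ξ10]=−ξ7,
[ξ1,ξ11]=−ξ10, [ξ2,ξ6]=−ξ2, [ξ2,ξ9]=ξ6, [ξ3,ξ5]=−ξ3, [ξ3,ξ7]=3ξ1, [ξ3,ξ8]=ξ7,
[ξ3,ξ10]=ξ5, [ξ3,ξ11]=ξ8, [ξ4,ξ5]=−2ξ4, [ξ4,ξ8]=ξ3, [ξ4,ξ10]=−ξ1,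
[ξ4,ξ11]=−ξ5, [ξ5,ξ8]=−ξ8, [ξ5,ξ10]=−ξ10, [ξ5,ξ11]=−2ξ11, [ξ6,ξ9]=−ξ9,
[ξ7,ξ8]=3ξ10, [ξ7,ξ10]=−3ξ8, [ξ8,ξ10]=−2ξ11`. -/
def brFun (x y : V11) : V11 :=
    (-2 * (x 0 * y 2 - x 2 * y 0)) • ξ 3
  + (-(x 0 * y 4 - x 4 * y 0)) • ξ 0
  + (-3 * (x 0 * y 6 - x 6 * y 0)) • ξ 2
  + (x 0 * y 7 - x 7 * y 0) • ξ 4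
  + (-(x 0 * y 9 - x 9 * y 0)) • ξ 6
  + (-(x 0 * y 10 - x 10 * y 0)) • ξ 9
  + (-(x 1 * y 5 - x 5 * y 1)) • ξ 1
  + (x 1 * y 8 - x 8 * y 1) • ξ 5
  + (-(x 2 * y 4 - x 4 * y 2)) • ξ 2
  + (3 * (x 2 * y 6 - x 6 * y 2)) • ξ 0
  + (x 2 * y 7 - x 7 * y 2) • ξ 6
  + (x 2 * y 9 - x 9 * y 2) • ξ 4
  + (x 2 * y 10 - x 10 * y 2) • ξ 7
  + (-2 * (x 3 * y 4 - x 4 * y 3)) • ξ 3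
  + (x 3 * y 7 - x 7 * y 3) • ξ 2
  + (-(x 3 * y 9 - x 9 * y 3)) • ξ 0
  + (-(x 3 * y 10 - x 10 * y 3)) • ξ 4
  + (-(x 4 * y 7 - x 7 * y 4)) • ξ 7
  + (-(x 4 * y 9 - x 9 * y 4)) • ξ 9
  + (-2 * (x 4 * y 10 - x 10 * y 4)) • ξ 10
  + (-(x 5 * y 8 - x 8 * y 5)) • ξ 8
  + (3 * (x 6 * y 7 - x 7 * y 6)) • ξ 9
  + (-3 * (x 6 * y 9 - x 9 * y 6)) • ξ 7
  + (-2 * (x 7 * y 9 - x 9 * y 7)) • ξ 10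

/-- The bracket of `M = F(A4)` as a bilinear map. -/
def br : V11 →ₗ[ℂ] V11 →ₗ[ℂ] V11 :=
  LinearMap.mk₂ ℂ brFun
    (fun x x' y => by
      funext k; simp only [brFun, Pi.add_apply, Pi.smul_apply, smul_eq_mul]; ring)
    (fun a x y => by
      funext k; simp only [brFun, Pi.add_apply, Pi.smul_apply, smul_eq_mul]; ring)
    (fun x y y' => by
      funext k; simp only [brFun, Pi.add_apply, Pi.smul_apply, smul_eq_mul]; ring)
    (fun a x y => by
      funext k; simp only [brFun, Pi.add_apply, Pi.smul_apply, smul_eq_mul]; ring)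

open Complex LieAlgebra.SpecialLinear

lemma brFun_apply (x y : V11) (k : Fin 11) : brFun x y k =
    (-2 * (x 0 * y 2 - x 2 * y 0)) * (if k = (3:Fin 11) then 1 else 0)
  + (-(x 0 * y 4 - x 4 * y 0)) * (if k = (0:Fin 11) then 1 else 0)
  + (-3 * (x 0 * y 6 - x 6 * y 0)) * (if k = (2:Fin 11) then 1 else 0)
  + (x 0 * y 7 - x 7 * y 0) * (if k = (4:Fin 11) then 1 else 0)
  + (-(x 0 * y 9 - x 9 * y 0)) * (if k = (6:Fin 11) then 1 else 0)
  + (-(x 0 * y 10 - x 10 * y 0)) * (if k = (9:Fin 11) then 1 else 0)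
  + (-(x 1 * y 5 - x 5 * y 1)) * (if k = (1:Fin 11) then 1 else 0)
  + (x 1 * y 8 - x 8 * y 1) * (if k = (5:Fin 11) then 1 else 0)
  + (-(x 2 * y 4 - x 4 * y 2)) * (if k = (2:Fin 11) then 1 else 0)
  + (3 * (x 2 * y 6 - x 6 * y 2)) * (if k = (0:Fin 11) then 1 else 0)
  + (x 2 * y 7 - x 7 * y 2) * (if k = (6:Fin 11) then 1 else 0)
  + (x 2 * y 9 - x 9 * y 2) * (if k = (4:Fin 11) then 1 else 0)
  + (x 2 * y 10 - x 10 * y 2) * (if k = (7:Fin 11) then 1 else 0)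
  + (-2 * (x 3 * y 4 - x 4 * y 3)) * (if k = (3:Fin 11) then 1 else 0)
  + (x 3 * y 7 - x 7 * y 3) * (if k = (2:Fin 11) then 1 else 0)
  + (-(x 3 * y 9 - x 9 * y 3)) * (if k = (0:Fin 11) then 1 else 0)
  + (-(x 3 * y 10 - x 10 * y 3)) * (if k = (4:Fin 11) then 1 else 0)
  + (-(x 4 * y 7 - x 7 * y 4)) * (if k = (7:Fin 11) then 1 else 0)
  + (-(x 4 * y 9 - x 9 * y 4)) * (if k = (9:Fin 11) then 1 else 0)
  + (-2 * (x 4 * y 10 - x 10 * y 4)) * (if k = (10:Fin 11) then 1 else 0)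
  + (-(x 5 * y 8 - x 8 * y 5)) * (if k = (8:Fin 11) then 1 else 0)
  + (3 * (x 6 * y 7 - x 7 * y 6)) * (if k = (9:Fin 11) then 1 else 0)
  + (-3 * (x 6 * y 9 - x 9 * y 6)) * (if k = (7:Fin 11) then 1 else 0)
  + (-2 * (x 7 * y 9 - x 9 * y 7)) * (if k = (10:Fin 11) then 1 else 0) := by
  simp only [brFun, Pi.add_apply, Pi.smul_apply, ξ, Pi.single_apply, smul_eq_mul]

/-- sl2 component of the isomorphism. -/
def f2M (x : V11) : Matrix (Fin 2) (Fin 2) ℂ :=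
  !![x 5 / 2, x 1; x 8 / 2, -(x 5 / 2)]

/-- sl3 component of the isomorphism. -/
def f3M (x : V11) : Matrix (Fin 3) (Fin 3) ℂ :=
  !![x 4 - I * x 6, x 0 - I * x 2, -I * x 3;
     x 7 + I * x 9, 2 * I * x 6, x 0 + I * x 2;
     -I * x 10, x 7 - I * x 9, -(x 4) - I * x 6]

lemma f2M_mem (x : V11) : f2M x ∈ sl (Fin 2) ℂ := by
  show Matrix.trace (f2M x) = 0
  simp [f2M, Matrix.trace_fin_two]

lemma f3M_mem (x : V11) : f3M x ∈ sl (Fin 3) ℂ := by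
  show Matrix.trace (f3M x) = 0
  simp [f3M, Matrix.trace_fin_three]; ring

/-- The forward linear map. -/
def fL : V11 →ₗ[ℂ] (↥(sl (Fin 2) ℂ) × ↥(sl (Fin 3) ℂ)) where
  toFun x := (⟨f2M x, f2M_mem x⟩, ⟨f3M x, f3M_mem x⟩)
  map_add' x y := by
    refine Prod.ext (Subtype.ext ?_) (Subtype.ext ?_) <;>
      · show _ = (_ : Matrix _ _ ℂ) + _
        funext i j
        fin_cases i <;> fin_cases j <;>
          simp [f2M, f3M, Matrix.add_apply] <;> ring
  map_smul' c x := by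
    refine Prod.ext (Subtype.ext ?_) (Subtype.ext ?_) <;>
      · show _ = c • (_ : Matrix _ _ ℂ)
        funext i j
        fin_cases i <;> fin_cases j <;>
          simp [f2M, f3M, Matrix.smul_apply] <;> ring

/-- entries of the inverse map -/
def BB (p : ↥(sl (Fin 2) ℂ) × ↥(sl (Fin 3) ℂ)) : Matrix (Fin 2) (Fin 2) ℂ := p.1
/-- 3x3 coercion -/
def AA (p : ↥(sl (Fin 2) ℂ) × ↥(sl (Fin 3) ℂ)) : Matrix (Fin 3) (Fin 3) ℂ := p.2

/-- the inverse map as a function -/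
def gFun (p : ↥(sl (Fin 2) ℂ) × ↥(sl (Fin 3) ℂ)) : V11 :=
    ((AA p 0 1 + AA p 1 2) / 2) • ξ 0
  + (BB p 0 1) • ξ 1
  + (I * (AA p 0 1 - AA p 1 2) / 2) • ξ 2
  + (I * AA p 0 2) • ξ 3
  + ((AA p 0 0 - AA p 2 2) / 2) • ξ 4
  + (BB p 0 0 - BB p 1 1) • ξ 5
  + (-(I * AA p 1 1) / 2) • ξ 6
  + ((AA p 1 0 + AA p 2 1) / 2) • ξ 7
  + (2 * BB p 1 0) • ξ 8
  + (-(I * (AA p 1 0 - AA p 2 1)) / 2) • ξ 9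
  + (I * AA p 2 0) • ξ 10

lemma gFun_apply (p : ↥(sl (Fin 2) ℂ) × ↥(sl (Fin 3) ℂ)) (k : Fin 11) :
    gFun p k =
    ((AA p 0 1 + AA p 1 2) / 2)
        * (if k = (0:Fin 11) then 1 else 0)
  + (BB p 0 1) * (if k = (1:Fin 11) then 1 else 0)
  + (I * (AA p 0 1 - AA p 1 2) / 2)
        * (if k = (2:Fin 11) then 1 else 0)
  + (I * AA p 0 2) * (if k = (3:Fin 11) then 1 else 0)
  + ((AA p 0 0 - AA p 2 2) / 2)
        * (if k = (4:Fin 11) then 1 else 0)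
  + (BB p 0 0 - BB p 1 1)
        * (if k = (5:Fin 11) then 1 else 0)
  + (-(I * AA p 1 1) / 2) * (if k = (6:Fin 11) then 1 else 0)
  + ((AA p 1 0 + AA p 2 1) / 2)
        * (if k = (7:Fin 11) then 1 else 0)
  + (2 * BB p 1 0) * (if k = (8:Fin 11) then 1 else 0)
  + (-(I * (AA p 1 0 - AA p 2 1)) / 2)
        * (if k = (9:Fin 11) then 1 else 0)
  + (I * AA p 2 0) * (if k = (10:Fin 11) then 1 else 0) := by
  simp only [gFun, AA, BB, Pi.add_apply, Pi.smul_apply, ξ, Pi.single_apply, smul_eq_mul]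

@[simp] lemma coe_fst_add (p q : ↥(sl (Fin 2) ℂ) × ↥(sl (Fin 3) ℂ)) :
    BB (p + q) = BB p + BB q := rfl
@[simp] lemma coe_snd_add (p q : ↥(sl (Fin 2) ℂ) × ↥(sl (Fin 3) ℂ)) :
    AA (p + q) = AA p + AA q := rfl
@[simp] lemma coe_fst_smul (c : ℂ) (p : ↥(sl (Fin 2) ℂ) × ↥(sl (Fin 3) ℂ)) :
    BB (c • p) = c • BB p := rfl
@[simp] lemma coe_snd_smul (c : ℂ) (p : ↥(sl (Fin 2) ℂ) × ↥(sl (Fin 3) ℂ)) :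
    AA (c • p) = c • AA p := rfl

/-- The inverse linear map. -/
def gL : (↥(sl (Fin 2) ℂ) × ↥(sl (Fin 3) ℂ)) →ₗ[ℂ] V11 where
  toFun := gFun
  map_add' p q := by
    funext k
    fin_cases k <;>
      simp only [gFun_apply, Pi.add_apply, coe_fst_add, coe_snd_add, Matrix.add_apply,
        Fin.mk_one, Fin.reduceEq, Fin.zero_eta, Fin.isValue, reduceIte,
        mul_one, mul_zero, add_zero, zero_add] <;> ring
  map_smul' c p := by
    funext k
    fin_cases k <;>
      simp only [gFun_apply, Pi.smul_apply, coe_fst_smul, coe_snd_smul, Matrix.smul_apply,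
        RingHom.id_apply, smul_eq_mul, Fin.mk_one, Fin.reduceEq, Fin.zero_eta, Fin.isValue,
        reduceIte, mul_one, mul_zero, add_zero, zero_add] <;> ring

lemma gf : gL.comp fL = LinearMap.id := by
  refine LinearMap.ext fun x => ?_
  funext k
  show gFun (fL x) k = x k
  fin_cases k <;>
    · simp only [gFun_apply, AA, BB, fL, LinearMap.coe_mk, AddHom.coe_mk, f2M, f3M]
      simp
      try ring_nf
      try simp [Complex.I_sq]
      try ring

@[simp] lemma gL_apply (p : ↥(sl (Fin 2) ℂ) × ↥(sl (Fin 3) ℂ)) : gL p = gFun p := rfl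

lemma fg : fL.comp gL = LinearMap.id := by
  refine LinearMap.ext fun p => ?_
  have hB : (p.1 : Matrix (Fin 2) (Fin 2) ℂ) 0 0 + (p.1 : Matrix (Fin 2) (Fin 2) ℂ) 1 1 = 0 := by
    have h : Matrix.trace (p.1 : Matrix (Fin 2) (Fin 2) ℂ) = 0 := p.1.2
    rwa [Matrix.trace_fin_two] at h
  have hA : (p.2 : Matrix (Fin 3) (Fin 3) ℂ) 0 0 + (p.2 : Matrix (Fin 3) (Fin 3) ℂ) 1 1
      + (p.2 : Matrix (Fin 3) (Fin 3) ℂ) 2 2 = 0 := by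
    have h : Matrix.trace (p.2 : Matrix (Fin 3) (Fin 3) ℂ) = 0 := p.2.2
    rwa [Matrix.trace_fin_three] at h
  refine Prod.ext (Subtype.ext ?_) (Subtype.ext ?_) <;>
    · show (_ : Matrix _ _ ℂ) = _
      funext i j
      fin_cases i <;> fin_cases j <;>
        · show _ = _
          simp only [fL, LinearMap.coe_mk, AddHom.coe_mk, LinearMap.coe_comp,
            Function.comp_apply, LinearMap.id_apply, f2M, f3M, gFun_apply]
          simp [gL_apply, gFun_apply, AA, BB]
          try ring_nf
          try simp [Complex.I_sq]
          try first
          | ring1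
          | linear_combination (-1/2 : ℂ) * hB
          | linear_combination (1/2 : ℂ) * hB
          | linear_combination (-1/2 : ℂ) * hA
          | linear_combination (1/2 : ℂ) * hA
          | skip

/-- The key bracket compatibility. -/
lemma key (x y : V11) :
    fL (br x y) = (⁅(fL x).1, (fL y).1⁆, ⁅(fL x).2, (fL y).2⁆) := by
  refine Prod.ext (Subtype.ext ?_) (Subtype.ext ?_) <;>
    · show (_ : Matrix _ _ ℂ) = ⁅(_ : Matrix _ _ ℂ), _⁆
      rw [Ring.lie_def]
      funext i j
      fin_cases i <;> fin_cases j <;>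
        · show _ = _
          simp only [fL, LinearMap.coe_mk, AddHom.coe_mk, f2M, f3M,
            show (br x y) = brFun x y from rfl]
          simp [Matrix.mul_apply, Matrix.sub_apply, Fin.sum_univ_succ, brFun_apply]
          try ring_nf
          try simp [Complex.I_sq]
          try ring

private lemma jac3 {L : Type*} [LieRing L] (a b c : L) :
    ⁅⁅a,b⁆,c⁆ + ⁅⁅b,c⁆,a⁆ + ⁅⁅c,a⁆,b⁆ = 0 := by
  rw [← lie_skew ⁅a,b⁆ c, ← lie_skew ⁅b,c⁆ a, ← lie_skew ⁅c,a⁆ b,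
      ← neg_add, ← neg_add, neg_eq_zero]
  exact lie_jacobi c a b


open LieAlgebra.SpecialLinear in
/-- **Theorem.** The bracket of `M = F(A4)` is alternating and satisfies the
Jacobi identity, so `M` is an 11-dimensional complex Lie algebra, and `M` is
isomorphic as a Lie algebra to the direct product `sl₂(ℂ) × sl₃(ℂ)`. -/
theorem FA4_lie_algebra :
    -- `M` is an 11-dimensional complex Lie algebra:
    (∀ x : V11, br x x = 0) ∧
    (∀ x y z : V11, br (br x y) z + br (br y z) x + br (br z x) y = 0) ∧
    Module.finrank ℂ V11 = 11 ∧
    -- `M ≅ sl₂(ℂ) × sl₃(ℂ)` as Lie algebras: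
    ∃ e : V11 ≃ₗ[ℂ] (↥(sl (Fin 2) ℂ) × ↥(sl (Fin 3) ℂ)),
      ∀ x y : V11, e (br x y) = (⁅(e x).1, (e y).1⁆, ⁅(e x).2, (e y).2⁆) := by
  set e : V11 ≃ₗ[ℂ] (↥(sl (Fin 2) ℂ) × ↥(sl (Fin 3) ℂ)) :=
    LinearEquiv.ofLinear fL gL fg gf with he
  have ekey : ∀ x y : V11, e (br x y) = (⁅(e x).1, (e y).1⁆, ⁅(e x).2, (e y).2⁆) := by
    intro x y
    simp only [he, LinearEquiv.ofLinear_apply]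
    exact key x y
  refine ⟨?_, ?_, ?_, e, ekey⟩
  · intro x
    apply e.injective
    rw [map_zero, ekey x x, lie_self, lie_self]
    rfl
  · intro x y z
    apply e.injective
    simp only [map_zero, map_add, ekey]
    refine Prod.ext ?_ ?_ <;>
      simp only [Prod.fst_add, Prod.snd_add, Prod.fst_zero, Prod.snd_zero] <;>
      exact jac3 _ _ _
  · simp
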